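/- The characteristic function of the product Z = W·X of two independent centered Gaussian random variables W ~ N(0, σ_w²) and X ~ N(0, σ_x²) is φ_Z(t) = (1 + σ_w² σ_x² t²)^(-1/2). -/

import Mathlib

open MeasureTheory ProbabilityTheory Complex
open scoped NNReal

/-!
By independence, the law of `(W, X)` is the product measure, so Fubini lets us integrate in `X`
first: for fixed `W = w` the inner integral is the characteristic function of `N(0, σx²)`
at `t w`, namely `exp (-σx² t² w² / 2)`. Averaging this Gaussian in `w` against `N(0, σw²)`
is again a Gaussian integral, equal to `(1 + σw² σx² t²)^(-1/2)`.
-/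

theorem ProbabilityTheory.IndepFun.integral_comp_eq_integral_integral
    {Ω α β E : Type*} [MeasurableSpace Ω] [MeasurableSpace α] [MeasurableSpace β]
    [NormedAddCommGroup E] [NormedSpace ℝ E]
    {P : Measure Ω} [IsFiniteMeasure P] {X : Ω → α} {Y : Ω → β}
    (hXY : IndepFun X Y P) (hX : AEMeasurable X P) (hY : AEMeasurable Y P)
    {f : α × β → E} (hf : Integrable f ((P.map X).prod (P.map Y))) :
    ∫ ω, f (X ω, Y ω) ∂P = ∫ x, ∫ y, f (x, y) ∂(P.map Y) ∂(P.map X) := by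
  have hlaw := hXY.map_prod_eq_prod_map_map hX hY
  rw [← integral_prod f hf, ← hlaw,
    integral_map (hX.prodMk hY) (hlaw ▸ hf.aestronglyMeasurable)]

theorem integral_cexp_mul_I_gaussianReal (v : ℝ≥0) (s : ℝ) :
    ∫ x, cexp (s * x * I) ∂(gaussianReal 0 v) = ↑(Real.exp (-(v * s ^ 2 / 2))) := by
  rw [← charFun_apply_real, charFun_gaussianReal]
  push_cast
  ring_nf

theorem integral_exp_neg_mul_sq_gaussianReal {v : ℝ≥0} {c : ℝ} (hc : 0 < 1 + 2 * c * v) :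
    ∫ x, Real.exp (-c * x ^ 2) ∂(gaussianReal 0 v) = (1 + 2 * c * v) ^ (-(1 / 2) : ℝ) := by
  rcases eq_or_ne v 0 with rfl | hv
  · simp
  have hb : 0 < (2 * (v : ℝ))⁻¹ + c := by
    rw [← mul_lt_mul_iff_right₀ (by positivity : (0 : ℝ) < 2 * v)]
    field_simp
    linarith
  have hdensity : ∀ x : ℝ, gaussianPDFReal 0 v x • Real.exp (-c * x ^ 2)
      = (√(2 * Real.pi * v))⁻¹ * Real.exp (-((2 * (v : ℝ))⁻¹ + c) * x ^ 2) := by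
    intro x
    rw [gaussianPDFReal, smul_eq_mul, mul_assoc, ← Real.exp_add]
    congr 2
    field_simp
    ring
  simp_rw [integral_gaussianReal_eq_integral_smul hv, hdensity]
  rw [integral_const_mul, integral_gaussian, Real.rpow_neg hc.le, ← Real.sqrt_eq_rpow,
    ← Real.sqrt_inv, ← Real.sqrt_inv, ← Real.sqrt_mul (by positivity)]
  congr 1
  field_simp

theorem charFun_prod_indep_gaussians_general
    {Ω : Type*} [MeasurableSpace Ω] (P : Measure Ω) [IsProbabilityMeasure P]
    (W X : Ω → ℝ) (hWm : Measurable W) (hXm : Measurable X)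
    (σw σx : ℝ≥0)
    (hW : P.map W = gaussianReal 0 (σw ^ 2))
    (hX : P.map X = gaussianReal 0 (σx ^ 2))
    (hindep : IndepFun W X P) :
    ∀ t : ℝ,
      ∫ ω, Complex.exp (Complex.I * t * (W ω * X ω)) ∂P =
        (((1 + (σw : ℝ) ^ 2 * (σx : ℝ) ^ 2 * t ^ 2) ^ (-(1 / 2) : ℝ) : ℝ) : ℂ) := by
  intro t
  have hphase : ∀ w x : ℝ, I * t * (w * x) = ↑(t * w) * x * I := fun w x => by push_cast; ring
  have hint : Integrable (fun p : ℝ × ℝ => cexp (I * t * (p.1 * p.2)))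
      ((P.map W).prod (P.map X)) :=
    (integrable_const (1 : ℝ)).mono' (by fun_prop) (ae_of_all _ fun p => by
      rw [hphase, ← ofReal_mul, norm_exp_ofReal_mul_I])
  have hinner : ∀ w : ℝ, ∫ x, cexp (I * t * (w * x)) ∂(gaussianReal 0 (σx ^ 2))
      = ↑(Real.exp (-((σx : ℝ) ^ 2 * t ^ 2 / 2) * w ^ 2)) := fun w => by
    simp_rw [hphase, integral_cexp_mul_I_gaussianReal]
    push_cast
    ring_nf
  rw [hindep.integral_comp_eq_integral_integral hWm.aemeasurable hXm.aemeasurable hint, hW, hX]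
  simp_rw [hinner]
  rw [integral_complex_ofReal, integral_exp_neg_mul_sq_gaussianReal (by positivity)]
  congr 2
  push_cast
  ring

/-- The characteristic function of the product `Z = W * X` of two independent
centered Gaussian random variables `W ~ N(0, σw²)` and `X ~ N(0, σx²)` is
`φ_Z(t) = (1 + σw² σx² t²)^(-1/2)`. -/
theorem charFun_prod_indep_gaussians
    {Ω : Type*} [MeasurableSpace Ω] (P : Measure Ω) [IsProbabilityMeasure P]
    (W X : Ω → ℝ) (hWm : Measurable W) (hXm : Measurable X)
    (σw σx : ℝ≥0) (hσw : 0 < σw) (hσx : 0 < σx)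
    (hW : P.map W = gaussianReal 0 (σw ^ 2))
    (hX : P.map X = gaussianReal 0 (σx ^ 2))
    (hindep : IndepFun W X P) :
    ∀ t : ℝ,
      ∫ ω, Complex.exp (Complex.I * t * (W ω * X ω)) ∂P =
        (((1 + (σw : ℝ) ^ 2 * (σx : ℝ) ^ 2 * t ^ 2) ^ (-(1 / 2) : ℝ) : ℝ) : ℂ) :=
  charFun_prod_indep_gaussians_general P W X hWm hXm σw σx hW hX hindep
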